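/- arXiv:2508.01976 — 5 statements merged into one kernel-verified Lean document; each statement's English description precedes it below -/
import Mathlib

section
/- Let θ₁, θ₂ ∈ ℝ, let v ≥ 0 be a variance, and let K, L ∈ ℕ. Define C_{K,j} := (K.choose (2*j)) * ((2*j)! / (j! * 2^j)). Let μ := (gaussianReal θ₁ v).prod (gaussianReal θ₂ v) on ℝ × ℝ. Then ∫ ( Σ_{j=0}^{⌊K/2⌋} Σ_{λ=0}^{⌊L/2⌋} C_{K,j} * C_{L,λ} * (−1)^{j+λ} * v^{j+λ} * x₁^(K−2*j) * x₂^(L−2*λ) ) dμ(x₁, x₂) = θ₁^K * θ₂^L. -/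
/-!
Write `heatPoly s n x = ∑ₖ C(n, 2k) (2k-1)‼ sᵏ x^(n-2k)`. Completing the binomial expansion of
`(θ + Z)ⁿ` with the Gaussian moments `E Z^(2k) = (2k-1)‼ vᵏ` shows that the `n`-th moment of
`N(θ, v)` is `heatPoly v n θ`. In `s`, these polynomials obey the addition law of the
exponential generating function `exp (s t² / 2)`, so the expectation of the estimator
`heatPoly (-v) n` is `heatPoly (-v + v) n θ = θⁿ`. Under the product measure the
two-dimensional statistic factors into two such estimators.
-/

open MeasureTheory ProbabilityTheory Real Finset
open scoped NNReal Nat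

namespace Nat

theorem factorial_two_mul_eq (n : ℕ) : (2 * n)! = (2 * n - 1)‼ * (2 ^ n * n !) := by
  cases n with
  | zero => rfl
  | succ n =>
    rw [show 2 * (n + 1) = 2 * n + 1 + 1 by ring, factorial_eq_mul_doubleFactorial,
      show 2 * n + 1 + 1 = 2 * (n + 1) by ring, doubleFactorial_two_mul, mul_comm,
      show 2 * (n + 1) - 1 = 2 * n + 1 by omega]

theorem factorial_two_mul_div (n : ℕ) : (2 * n)! / (n ! * 2 ^ n) = (2 * n - 1)‼ := by
  rw [factorial_two_mul_eq, mul_comm n !, Nat.mul_div_cancel _ (by positivity)]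

theorem choose_two_mul_mul_doubleFactorial (j a : ℕ) :
    (2 * (j + a)).choose (2 * j) * (2 * j - 1)‼ * (2 * a - 1)‼
      = (j + a).choose j * (2 * (j + a) - 1)‼ := by
  refine Nat.eq_of_mul_eq_mul_right (by positivity : 0 < 2 ^ (j + a) * (j ! * a !)) ?_
  calc (2 * (j + a)).choose (2 * j) * (2 * j - 1)‼ * (2 * a - 1)‼ * (2 ^ (j + a) * (j ! * a !))
      = (2 * (j + a)).choose (2 * j) * ((2 * j - 1)‼ * (2 ^ j * j !))
          * ((2 * a - 1)‼ * (2 ^ a * a !)) := by ring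
    _ = (2 * (j + a))! := by
        rw [← factorial_two_mul_eq, ← factorial_two_mul_eq,
          ← choose_mul_factorial_mul_factorial (by omega : 2 * j ≤ 2 * (j + a)),
          show 2 * (j + a) - 2 * j = 2 * a by omega]
    _ = (j + a).choose j * j ! * (j + a - j)! * ((2 * (j + a) - 1)‼ * 2 ^ (j + a)) := by
        rw [choose_mul_factorial_mul_factorial (by omega), factorial_two_mul_eq]; ring
    _ = (j + a).choose j * (2 * (j + a) - 1)‼ * (2 ^ (j + a) * (j ! * a !)) := by
        rw [show j + a - j = a by omega]; ring

theorem choose_mul_doubleFactorial_mul_choose_mul_doubleFactorial (n j a : ℕ) :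
    n.choose (2 * j) * (2 * j - 1)‼ * ((n - 2 * j).choose (2 * a) * (2 * a - 1)‼)
      = n.choose (2 * (j + a)) * (2 * (j + a) - 1)‼ * (j + a).choose j := by
  have h := choose_mul (n := n) (k := 2 * (j + a)) (s := 2 * j) (by omega)
  rw [show 2 * (j + a) - 2 * j = 2 * a by omega] at h
  calc n.choose (2 * j) * (2 * j - 1)‼ * ((n - 2 * j).choose (2 * a) * (2 * a - 1)‼)
      = n.choose (2 * j) * (n - 2 * j).choose (2 * a) * ((2 * j - 1)‼ * (2 * a - 1)‼) := by ring
    _ = n.choose (2 * (j + a)) * ((2 * (j + a)).choose (2 * j) * (2 * j - 1)‼ * (2 * a - 1)‼) := by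
        rw [← h]; ring
    _ = _ := by rw [choose_two_mul_mul_doubleFactorial]; ring

end Nat

theorem Finset.sum_range_succ_eq_sum_two_mul_of_odd_eq_zero {M : Type*} [AddCommMonoid M]
    (n : ℕ) (f : ℕ → M) (hf : ∀ k, f (2 * k + 1) = 0) :
    ∑ m ∈ range (n + 1), f m = ∑ k ∈ range (n / 2 + 1), f (2 * k) := by
  have hsub : (range (n / 2 + 1)).image (2 * ·) ⊆ range (n + 1) := by
    intro m hm
    obtain ⟨k, hk, rfl⟩ := mem_image.mp hm
    simp only [mem_range] at hk ⊢
    omega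
  rw [← sum_image (f := f) (s := range (n / 2 + 1)) (g := (2 * ·))
    fun _ _ _ _ h => by simpa using h]
  refine (sum_subset hsub fun m hm hm' => ?_).symm
  obtain ⟨k, rfl | rfl⟩ := Nat.even_or_odd' m
  · refine absurd (mem_image.mpr ⟨k, ?_, rfl⟩) hm'
    simp only [mem_range] at hm ⊢
    omega
  · exact hf k

/-- The coefficient `n.choose (2 * k) * (2 * k - 1)‼` is the paper's `C_{n,k}`. -/
noncomputable def heatPoly (s : ℝ) (n : ℕ) (x : ℝ) : ℝ :=
  ∑ k ∈ range (n / 2 + 1), ((n.choose (2 * k) * (2 * k - 1)‼ : ℕ) : ℝ) * s ^ k * x ^ (n - 2 * k)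

theorem heatPoly_zero_left (n : ℕ) (x : ℝ) : heatPoly 0 n x = x ^ n := by
  rw [heatPoly, sum_range_succ', sum_eq_zero fun k _ => by simp]
  simp

theorem heatPoly_add (s t : ℝ) (n : ℕ) (x : ℝ) :
    heatPoly (s + t) n x = ∑ j ∈ range (n / 2 + 1),
      ((n.choose (2 * j) * (2 * j - 1)‼ : ℕ) : ℝ) * s ^ j * heatPoly t (n - 2 * j) x := by
  set c : ℕ → ℕ → ℝ := fun m k => ((m.choose (2 * k) * (2 * k - 1)‼ : ℕ) : ℝ)
  let f : ℕ → ℕ → ℝ := fun j a =>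
    c n (j + a) * ((j + a).choose j : ℝ) * s ^ j * t ^ a * x ^ (n - 2 * (j + a))
  calc heatPoly (s + t) n x
      = ∑ m ∈ range (n / 2 + 1), ∑ j ∈ range (m + 1), f j (m - j) := by
        refine sum_congr rfl fun m _ => ?_
        rw [add_pow, mul_sum, sum_mul]
        refine sum_congr rfl fun j hj => ?_
        simp only [f, c, show j + (m - j) = m by rw [mem_range] at hj; omega]
        ring
    _ = ∑ j ∈ range (n / 2 + 1), ∑ a ∈ range (n / 2 + 1 - j), f j a := sum_range_diag_flip _ f
    _ = _ := by
        refine sum_congr rfl fun j hj => ?_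
        rw [mem_range] at hj
        rw [heatPoly, mul_sum, show n / 2 + 1 - j = (n - 2 * j) / 2 + 1 by omega]
        refine sum_congr rfl fun a _ => ?_
        have := congrArg (Nat.cast (R := ℝ))
          (Nat.choose_mul_doubleFactorial_mul_choose_mul_doubleFactorial n j a)
        push_cast at this
        simp only [f, c, show n - 2 * j - 2 * a = n - 2 * (j + a) by omega]
        push_cast
        linear_combination s ^ j * t ^ a * x ^ (n - 2 * (j + a)) * this.symm

theorem integrable_pow_gaussianReal (μ : ℝ) (v : ℝ≥0) (n : ℕ) :
    Integrable (fun x => x ^ n) (gaussianReal μ v) := by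
  refine (integrable_norm_iff (by fun_prop)).mp ?_
  simpa [norm_pow] using (memLp_id_gaussianReal (μ := μ) (v := v) n).integrable_norm_pow'

theorem integrable_pow_mul_exp_neg_mul_sq {b : ℝ} (hb : 0 < b) (n : ℕ) :
    Integrable fun x : ℝ => x ^ n * exp (-b * x ^ 2) := by
  simpa [rpow_natCast] using integrable_rpow_mul_exp_neg_mul_sq hb (s := n)
    (neg_one_lt_zero.trans_le n.cast_nonneg)

/-- Integration by parts against `d/dx exp (-b x²) = -2 b x exp (-b x²)`. -/
theorem integral_pow_add_two_mul_exp_neg_mul_sq {b : ℝ} (hb : 0 < b) (n : ℕ) :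
    ∫ x, x ^ (n + 2) * exp (-b * x ^ 2) = (n + 1) / (2 * b) * ∫ x, x ^ n * exp (-b * x ^ 2) := by
  have hderiv (x : ℝ) : HasDerivAt (fun y => y ^ (n + 1) * exp (-b * y ^ 2))
      ((n + 1) * (x ^ n * exp (-b * x ^ 2)) - 2 * b * (x ^ (n + 2) * exp (-b * x ^ 2))) x := by
    have hexp := ((hasDerivAt_pow 2 x).const_mul (-b)).exp
    have hmul : HasDerivAt (fun y => y ^ (n + 1) * exp (-b * y ^ 2)) _ x :=
      (hasDerivAt_pow (n + 1) x).mul hexp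
    convert hmul using 1
    push_cast
    ring
  have hint := integrable_pow_mul_exp_neg_mul_sq hb
  have hzero := integral_eq_zero_of_hasDerivAt_of_integrable hderiv
    (((hint n).const_mul _).sub ((hint (n + 2)).const_mul _)) (hint (n + 1))
  rw [integral_sub ((hint n).const_mul _) ((hint (n + 2)).const_mul _),
    integral_const_mul, integral_const_mul, sub_eq_zero] at hzero
  rw [div_mul_eq_mul_div, hzero, mul_div_cancel_left₀ _ (by positivity)]

theorem integral_gaussianReal_zero_eq {v : ℝ≥0} (hv : v ≠ 0) (g : ℝ → ℝ) :
    ∫ x, g x ∂gaussianReal 0 v = (√(2 * π * v))⁻¹ * ∫ x, g x * exp (-(2 * v : ℝ)⁻¹ * x ^ 2) := by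
  rw [integral_gaussianReal_eq_integral_smul hv, ← integral_const_mul]
  congr with x
  rw [gaussianPDFReal, smul_eq_mul, sub_zero, neg_div, neg_mul, div_eq_inv_mul]
  ring

theorem integral_pow_add_two_gaussianReal_zero (v : ℝ≥0) (n : ℕ) :
    ∫ x, x ^ (n + 2) ∂gaussianReal 0 v = (n + 1) * v * ∫ x, x ^ n ∂gaussianReal 0 v := by
  rcases eq_or_ne v 0 with rfl | hv
  · simp [gaussianReal_zero_var]
  have hb : (0 : ℝ) < (2 * v : ℝ)⁻¹ := by positivity
  rw [integral_gaussianReal_zero_eq hv, integral_gaussianReal_zero_eq hv,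
    integral_pow_add_two_mul_exp_neg_mul_sq hb]
  field_simp

theorem integral_pow_two_mul_gaussianReal_zero (v : ℝ≥0) (m : ℕ) :
    ∫ x, x ^ (2 * m) ∂gaussianReal 0 v = (2 * m - 1)‼ * (v : ℝ) ^ m := by
  induction m with
  | zero => simp
  | succ m ih =>
    rw [show 2 * (m + 1) = 2 * m + 2 by ring, integral_pow_add_two_gaussianReal_zero, ih,
      show 2 * m + 2 - 1 = 2 * m + 1 by omega, Nat.doubleFactorial_add_one]
    push_cast
    ring

theorem integral_pow_two_mul_add_one_gaussianReal_zero (v : ℝ≥0) (m : ℕ) :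
    ∫ x, x ^ (2 * m + 1) ∂gaussianReal 0 v = 0 := by
  induction m with
  | zero => simp [integral_id_gaussianReal (μ := 0) (v := v)]
  | succ m ih =>
    rw [show 2 * (m + 1) + 1 = 2 * m + 1 + 2 by ring, integral_pow_add_two_gaussianReal_zero, ih,
      mul_zero]

theorem integral_pow_gaussianReal (θ : ℝ) (v : ℝ≥0) (n : ℕ) :
    ∫ x, x ^ n ∂gaussianReal θ v = heatPoly v n θ := by
  have hmap : (gaussianReal 0 v).map (· + θ) = gaussianReal θ v := by
    simpa using gaussianReal_map_add_const (μ := 0) (v := v) θ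
  rw [← hmap, integral_map (by fun_prop) (by fun_prop)]
  simp_rw [add_pow]
  rw [integral_finsetSum _ fun m _ => ((integrable_pow_gaussianReal 0 v m).mul_const _).mul_const _]
  simp_rw [integral_mul_const]
  rw [sum_range_succ_eq_sum_two_mul_of_odd_eq_zero _ _ fun k => by
    rw [integral_pow_two_mul_add_one_gaussianReal_zero, zero_mul, zero_mul]]
  refine sum_congr rfl fun k _ => ?_
  rw [integral_pow_two_mul_gaussianReal_zero]
  push_cast
  ring

theorem integral_heatPoly_neg_gaussianReal (θ : ℝ) (v : ℝ≥0) (n : ℕ) :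
    ∫ x, heatPoly (-v) n x ∂gaussianReal θ v = θ ^ n := by
  unfold heatPoly
  rw [integral_finsetSum _ fun k _ => (integrable_pow_gaussianReal θ v _).const_mul _]
  simp_rw [integral_const_mul, integral_pow_gaussianReal]
  rw [← heatPoly_add, neg_add_cancel, heatPoly_zero_left]

/-- Bivariate debiasing identity (d = 2 case of the debiased moment matrix):
for independent `X₁ ~ N(θ₁, v)` and `X₂ ~ N(θ₂, v)`, the statistic
`∑_j ∑_λ C_{K,j} C_{L,λ} (-1)^{j+λ} v^{j+λ} X₁^(K-2j) X₂^(L-2λ)` is an unbiased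
estimator of `θ₁^K θ₂^L`, where `C_{K,j} = (K choose 2j) (2j)!/(j! 2^j)`. -/
theorem debiased_moment_unbiased_two_dim (θ₁ θ₂ : ℝ) (v : ℝ≥0) (K L : ℕ) :
    ∫ p : ℝ × ℝ,
        (∑ j ∈ Finset.range (K / 2 + 1), ∑ l ∈ Finset.range (L / 2 + 1),
          ((K.choose (2 * j) * ((2 * j).factorial / (j.factorial * 2 ^ j)) : ℕ) : ℝ)
            * ((L.choose (2 * l) * ((2 * l).factorial / (l.factorial * 2 ^ l)) : ℕ) : ℝ)
            * (-1) ^ (j + l) * (v : ℝ) ^ (j + l)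
            * p.1 ^ (K - 2 * j) * p.2 ^ (L - 2 * l))
        ∂((gaussianReal θ₁ v).prod (gaussianReal θ₂ v))
      = θ₁ ^ K * θ₂ ^ L := by
  simp only [Nat.factorial_two_mul_div]
  calc _ = ∫ p : ℝ × ℝ, heatPoly (-v) K p.1 * heatPoly (-v) L p.2
          ∂((gaussianReal θ₁ v).prod (gaussianReal θ₂ v)) := by
        congr with p
        rw [heatPoly, heatPoly, sum_mul_sum]
        exact sum_congr rfl fun j _ => sum_congr rfl fun l _ => by ring
    _ = θ₁ ^ K * θ₂ ^ L := by
        rw [integral_prod_mul, integral_heatPoly_neg_gaussianReal,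
          integral_heatPoly_neg_gaussianReal]
end

section
/- Let (Ω, 𝓕, ℙ) be a probability space, v ≥ 0 a variance, and K ∈ ℕ. Let (θᵢ, εᵢ)_{i ∈ ℕ} be an i.i.d. sequence of pairs of real random variables such that ε₀ is independent of θ₀, ε₀ has law gaussianReal 0 v, and E[|θ₀|^K] < ∞. Set Xᵢ := θᵢ + εᵢ and define C_{K,j} := (K.choose (2*j)) * ((2*j)! / (j! * 2^j)). Then, ℙ-almost surely, (1/n) Σ_{i=0}^{n−1} Σ_{j=0}^{⌊K/2⌋} C_{K,j} * (−1)^j * v^j * Xᵢ^(K−2*j) → E[θ₀^K] as n → ∞. -/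
open MeasureTheory ProbabilityTheory Filter Finset
open scoped NNReal Nat

/-!
Write `S_w T m = ∑ₗ C(m, 2l) (2l-1)‼ wˡ T(m - 2l)` for a sequence `T`. Since `(2l-1)‼ wˡ` is
the `2l`-th moment of `N(0, w)` and the odd moments vanish, the binomial theorem and independence
give `E[(θ + ε)^m] = S_v (E[θ^·]) m`, while the debiased statistic of `x` is `S_{-v} (x^·) K`.
The transforms form a semigroup, `S_a ∘ S_b = S_{a+b}`, as convolution of centred Gaussians
suggests, so the statistic has mean `S_0 (E[θ^·]) K = E[θ^K]`, and the strong law of large numbers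
applies to the i.i.d. statistics of the `Xᵢ = θᵢ + εᵢ`.
-/

theorem Nat.doubleFactorial_two_mul_sub_one_mul (n : ℕ) :
    (2 * n - 1)‼ * (n ! * 2 ^ n) = (2 * n)! := by
  cases n with
  | zero => rfl
  | succ k =>
    have h := Nat.factorial_eq_mul_doubleFactorial (2 * k + 1)
    rw [show 2 * k + 1 + 1 = 2 * (k + 1) by ring, Nat.doubleFactorial_two_mul] at h
    rw [show 2 * (k + 1) - 1 = 2 * k + 1 by omega, h]
    ring

theorem Nat.factorial_two_mul_div_s6 (n : ℕ) : (2 * n)! / (n ! * 2 ^ n) = (2 * n - 1)‼ := by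
  rw [← Nat.doubleFactorial_two_mul_sub_one_mul, Nat.mul_div_cancel _ (by positivity)]

theorem Nat.choose_mul_doubleFactorial_mul_choose_mul_doubleFactorial_s6 {m j l : ℕ}
    (h : 2 * (j + l) ≤ m) :
    m.choose (2 * j) * (2 * j - 1)‼ * ((m - 2 * j).choose (2 * l) * (2 * l - 1)‼) =
      m.choose (2 * (j + l)) * (2 * (j + l) - 1)‼ * (j + l).choose j := by
  have hdf (n : ℕ) : ((2 * n - 1)‼ : ℚ) = (2 * n)! / (n ! * 2 ^ n) := by
    rw [eq_div_iff (by positivity)]; exact_mod_cast Nat.doubleFactorial_two_mul_sub_one_mul n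
  apply Nat.cast_injective (R := ℚ)
  push_cast
  rw [Nat.cast_choose ℚ (by omega : 2 * j ≤ m), Nat.cast_choose ℚ (by omega : 2 * l ≤ m - 2 * j),
    Nat.cast_choose ℚ h, Nat.cast_choose ℚ (by omega : j ≤ j + l), hdf, hdf, hdf,
    show m - 2 * j - 2 * l = m - 2 * (j + l) by omega, show j + l - j = l by omega]
  field_simp
  ring

theorem Finset.sum_range_succ_eq_sum_two_mul_of_odd {M : Type*} [AddCommMonoid M] {f : ℕ → M}
    (hf : ∀ u, Odd u → f u = 0) (m : ℕ) :
    ∑ u ∈ range (m + 1), f u = ∑ l ∈ range (m / 2 + 1), f (2 * l) := by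
  induction m with
  | zero => simp
  | succ m ih =>
    rw [sum_range_succ, ih]
    rcases Nat.even_or_odd (m + 1) with ⟨k, hk⟩ | ⟨k, hk⟩
    · rw [show (m + 1) / 2 = m / 2 + 1 by omega, sum_range_succ _ (m / 2 + 1),
        show 2 * (m / 2 + 1) = m + 1 by omega]
    · rw [hf _ ⟨k, hk⟩, add_zero, show (m + 1) / 2 = m / 2 by omega]

section MomentTransform

variable {R : Type*} [CommSemiring R]

/-- If `T` is the moment sequence of `θ` and `ε ∼ N(0, w)` is independent of `θ`, then
`gaussianMomentTransform w T` is the moment sequence of `θ + ε`. -/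
def gaussianMomentTransform (w : R) (T : ℕ → R) (m : ℕ) : R :=
  ∑ l ∈ range (m / 2 + 1), ((m.choose (2 * l) * (2 * l - 1)‼ : ℕ) : R) * w ^ l * T (m - 2 * l)

theorem gaussianMomentTransform_zero (T : ℕ → R) (m : ℕ) :
    gaussianMomentTransform 0 T m = T m := by
  rw [gaussianMomentTransform, sum_eq_single 0 (fun l _ hl => by simp [hl]) (by simp)]
  simp

theorem gaussianMomentTransform_gaussianMomentTransform (a b : R) (T : ℕ → R) (m : ℕ) :
    gaussianMomentTransform a (gaussianMomentTransform b T) m =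
      gaussianMomentTransform (a + b) T m := by
  set N := m / 2 + 1
  let F : ℕ → ℕ → R := fun j l =>
    ((m.choose (2 * j) * (2 * j - 1)‼ : ℕ) : R) * a ^ j *
      (((m - 2 * j).choose (2 * l) * (2 * l - 1)‼ : ℕ) * b ^ l * T (m - 2 * j - 2 * l))
  have hrow : ∀ j ∈ range N, ((m.choose (2 * j) * (2 * j - 1)‼ : ℕ) : R) * a ^ j *
      gaussianMomentTransform b T (m - 2 * j) = ∑ l ∈ range (N - j), F j l := by
    intro j hj
    rw [mem_range] at hj
    rw [gaussianMomentTransform, mul_sum, show (m - 2 * j) / 2 + 1 = N - j by omega]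
  -- Along `j + l = s` the coefficients combine into `C(s, j) aʲ bˡ`, i.e. into `(a + b) ^ s`.
  have hdiag : ∀ s ∈ range N, ∑ j ∈ range (s + 1), F j (s - j) =
      ((m.choose (2 * s) * (2 * s - 1)‼ : ℕ) : R) * (a + b) ^ s * T (m - 2 * s) := by
    intro s hs
    rw [mem_range] at hs
    rw [add_pow, mul_sum, sum_mul]
    refine sum_congr rfl fun j hj => ?_
    rw [mem_range] at hj
    obtain ⟨l, rfl⟩ : ∃ l, s = j + l := ⟨s - j, by omega⟩
    have key := Nat.choose_mul_doubleFactorial_mul_choose_mul_doubleFactorial_s6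
      (show 2 * (j + l) ≤ m by omega)
    simp only [F, Nat.add_sub_cancel_left, show m - 2 * j - 2 * l = m - 2 * (j + l) by omega]
    calc _ = ((m.choose (2 * j) * (2 * j - 1)‼ *
            ((m - 2 * j).choose (2 * l) * (2 * l - 1)‼) : ℕ) : R) *
            (a ^ j * b ^ l * T (m - 2 * (j + l))) := by push_cast; ring
      _ = _ := by rw [key]; push_cast; ring
  rw [gaussianMomentTransform, sum_congr rfl hrow, ← sum_range_diag_flip, sum_congr rfl hdiag,
    gaussianMomentTransform]

theorem gaussianMomentTransform_congr {w : R} {T T' : ℕ → R} {m : ℕ}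
    (h : ∀ k ≤ m, T k = T' k) : gaussianMomentTransform w T m = gaussianMomentTransform w T' m :=
  sum_congr rfl fun l _ => by rw [h _ (Nat.sub_le _ _)]

end MomentTransform

theorem integrable_pow_of_integrable_abs_pow {Ω : Type*} [MeasurableSpace Ω] {μ : Measure Ω}
    [IsFiniteMeasure μ] {X : Ω → ℝ} (hX : AEStronglyMeasurable X μ) {k K : ℕ}
    (hK : Integrable (fun ω => |X ω| ^ K) μ) (hk : k ≤ K) :
    Integrable (fun ω => X ω ^ k) μ := by
  refine ((integrable_const 1).add hK).mono' (hX.pow k) (ae_of_all _ fun ω => ?_)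
  rw [Pi.add_apply, norm_pow, Real.norm_eq_abs]
  rcases le_total |X ω| 1 with h | h
  · linarith [pow_le_one₀ (n := k) (abs_nonneg (X ω)) h, pow_nonneg (abs_nonneg (X ω)) K]
  · linarith [pow_le_pow_right₀ h hk]

namespace ProbabilityTheory

theorem integrable_gaussianReal_iff_integrable_mul {μ : ℝ} {v : ℝ≥0} (hv : v ≠ 0) {f : ℝ → ℝ} :
    Integrable f (gaussianReal μ v) ↔ Integrable fun x => gaussianPDFReal μ v x * f x := by
  simp only [gaussianReal_of_var_ne_zero _ hv, integrable_withDensity_iff_integrable_smul'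
    (measurable_gaussianPDF μ v) (ae_of_all _ fun _ => gaussianPDF_lt_top), toReal_gaussianPDF,
    smul_eq_mul]

theorem integrable_pow_gaussianReal (μ : ℝ) (v : ℝ≥0) (m : ℕ) :
    Integrable (fun x : ℝ => x ^ m) (gaussianReal μ v) := by
  refine (integrable_norm_iff (by fun_prop)).1 ?_
  simpa using (memLp_id_gaussianReal (μ := μ) (v := v) m).integrable_norm_pow'

theorem hasDerivAt_gaussianPDFReal (μ : ℝ) (v : ℝ≥0) (x : ℝ) :
    HasDerivAt (gaussianPDFReal μ v) (-((x - μ) / v) * gaussianPDFReal μ v x) x := by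
  have h := ((((hasDerivAt_id' x).sub_const μ).pow 2).neg.div_const (2 * (v : ℝ))).exp
    |>.const_mul (√(2 * Real.pi * v))⁻¹
  rw [gaussianPDFReal_def]
  refine h.congr_deriv ?_
  simp only [Pi.pow_apply, Pi.neg_apply]
  ring

theorem integral_pow_add_two_gaussianReal (v : ℝ≥0) (m : ℕ) :
    ∫ x, x ^ (m + 2) ∂gaussianReal 0 v = (m + 1) * v * ∫ x, x ^ m ∂gaussianReal 0 v := by
  rcases eq_or_ne v 0 with rfl | hv
  · simp
  have hint (k : ℕ) : Integrable fun x => gaussianPDFReal 0 v x * x ^ k :=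
    (integrable_gaussianReal_iff_integrable_mul hv).1 (integrable_pow_gaussianReal 0 v k)
  -- Stein's identity: the derivative of `x ^ (m + 1) * φ x` has integral zero.
  have hderiv (x : ℝ) : HasDerivAt (fun x => x ^ (m + 1) * gaussianPDFReal 0 v x)
      ((m + 1) * (gaussianPDFReal 0 v x * x ^ m) -
        (v : ℝ)⁻¹ * (gaussianPDFReal 0 v x * x ^ (m + 2))) x := by
    refine ((hasDerivAt_pow (m + 1) x).mul (hasDerivAt_gaussianPDFReal 0 v x)).congr_deriv ?_
    push_cast [Nat.add_sub_cancel, sub_zero]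
    ring
  have hstein := integral_eq_zero_of_hasDerivAt_of_integrable hderiv
    (((hint m).const_mul _).sub ((hint (m + 2)).const_mul _))
    (by simpa only [mul_comm] using hint (m + 1))
  rw [integral_sub ((hint m).const_mul _) ((hint (m + 2)).const_mul _), integral_const_mul,
    integral_const_mul, sub_eq_zero] at hstein
  simp only [integral_gaussianReal_eq_integral_smul hv, smul_eq_mul]
  have hv' : (v : ℝ) ≠ 0 := by exact_mod_cast hv
  rw [← mul_inv_cancel_left₀ hv' (∫ x, gaussianPDFReal 0 v x * x ^ (m + 2)), ← hstein]
  ring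

theorem integral_pow_two_mul_gaussianReal (v : ℝ≥0) (l : ℕ) :
    ∫ x, x ^ (2 * l) ∂gaussianReal 0 v = (2 * l - 1)‼ * (v : ℝ) ^ l := by
  induction l with
  | zero => simp
  | succ l ih =>
    rw [show 2 * (l + 1) = 2 * l + 2 by ring, integral_pow_add_two_gaussianReal, ih,
      show 2 * l + 2 - 1 = 2 * l + 1 by omega, Nat.doubleFactorial_add_one]
    push_cast
    ring

theorem integral_pow_two_mul_add_one_gaussianReal (v : ℝ≥0) (l : ℕ) :
    ∫ x, x ^ (2 * l + 1) ∂gaussianReal 0 v = 0 := by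
  induction l with
  | zero => simp [integral_id_gaussianReal]
  | succ l ih =>
    rw [show 2 * (l + 1) + 1 = 2 * l + 1 + 2 by ring, integral_pow_add_two_gaussianReal, ih,
      mul_zero]

variable {Ω : Type*} [MeasurableSpace Ω] {P : Measure Ω} {X Y : Ω → ℝ} {m : ℕ}

theorem IndepFun.pow (hXY : IndepFun X Y P) (a b : ℕ) :
    IndepFun (fun ω => X ω ^ a) (fun ω => Y ω ^ b) P :=
  hXY.comp (measurable_id.pow_const a) (measurable_id.pow_const b)

theorem IndepFun.integrable_pow_mul_pow (hXY : IndepFun X Y P) {a b : ℕ}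
    (hX : Integrable (fun ω => X ω ^ a) P) (hY : Integrable (fun ω => Y ω ^ b) P) :
    Integrable (fun ω => X ω ^ a * Y ω ^ b) P :=
  (hXY.pow a b).integrable_mul hX hY

theorem IndepFun.integrable_add_pow (hXY : IndepFun X Y P)
    (hX : ∀ k ≤ m, Integrable (fun ω => X ω ^ k) P)
    (hY : ∀ k ≤ m, Integrable (fun ω => Y ω ^ k) P) :
    Integrable (fun ω => (X ω + Y ω) ^ m) P := by
  simp only [add_pow]
  exact integrable_finsetSum _ fun k hk => (hXY.integrable_pow_mul_pow
    (hX k (mem_range_succ_iff.1 hk)) (hY (m - k) (Nat.sub_le m k))).mul_const _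

theorem IndepFun.integral_add_pow (hXY : IndepFun X Y P)
    (hX : ∀ k ≤ m, Integrable (fun ω => X ω ^ k) P)
    (hY : ∀ k ≤ m, Integrable (fun ω => Y ω ^ k) P) :
    ∫ ω, (X ω + Y ω) ^ m ∂P =
      ∑ k ∈ range (m + 1), (∫ ω, X ω ^ k ∂P) * (∫ ω, Y ω ^ (m - k) ∂P) * m.choose k := by
  simp only [add_pow]
  rw [integral_finsetSum _ fun k hk => (hXY.integrable_pow_mul_pow
    (hX k (mem_range_succ_iff.1 hk)) (hY (m - k) (Nat.sub_le m k))).mul_const _]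
  refine sum_congr rfl fun k hk => ?_
  rw [integral_mul_const, (hXY.pow k (m - k)).integral_fun_mul_eq_mul_integral
    (hX k (mem_range_succ_iff.1 hk)).aestronglyMeasurable (hY (m - k) (Nat.sub_le m k)).aestronglyMeasurable]


theorem integrable_gaussianMomentTransform {F : ℕ → Ω → ℝ} (w : ℝ)
    (hF : ∀ k ≤ m, Integrable (F k) P) :
    Integrable (fun ω => gaussianMomentTransform w (fun k => F k ω) m) P :=
  integrable_finsetSum _ fun _ _ => (hF _ (Nat.sub_le _ _)).const_mul _

theorem integral_gaussianMomentTransform {F : ℕ → Ω → ℝ} (w : ℝ)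
    (hF : ∀ k ≤ m, Integrable (F k) P) :
    ∫ ω, gaussianMomentTransform w (fun k => F k ω) m ∂P =
      gaussianMomentTransform w (fun k => ∫ ω, F k ω ∂P) m := by
  unfold gaussianMomentTransform
  rw [integral_finsetSum _ fun _ _ => (hF _ (Nat.sub_le _ _)).const_mul _]
  exact sum_congr rfl fun _ _ => integral_const_mul _ _

variable {v : ℝ≥0} {ε : Ω → ℝ}

theorem HasLaw.integrable_pow_of_gaussianReal {μ : ℝ} (hε : HasLaw ε (gaussianReal μ v) P)
    (k : ℕ) : Integrable (fun ω => ε ω ^ k) P :=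
  (integrable_map_measure (measurable_id.pow_const k).aestronglyMeasurable hε.aemeasurable).1
    (hε.map_eq ▸ integrable_pow_gaussianReal μ v k)

theorem IndepFun.integral_add_pow_of_hasLaw_gaussianReal (hXε : IndepFun X ε P)
    (hε : HasLaw ε (gaussianReal 0 v) P) (hX : ∀ k ≤ m, Integrable (fun ω => X ω ^ k) P) :
    ∫ ω, (X ω + ε ω) ^ m ∂P = gaussianMomentTransform (v : ℝ) (fun k => ∫ ω, X ω ^ k ∂P) m := by
  have hmoment (k : ℕ) : ∫ ω, ε ω ^ k ∂P = ∫ x, x ^ k ∂gaussianReal 0 v :=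
    hε.integral_comp (f := fun x => x ^ k) (by fun_prop)
  simp only [add_comm (X _)]
  rw [hXε.symm.integral_add_pow (fun k _ => hε.integrable_pow_of_gaussianReal k) hX,
    sum_range_succ_eq_sum_two_mul_of_odd fun u ⟨l, hl⟩ => by
      rw [hl, hmoment, integral_pow_two_mul_add_one_gaussianReal, zero_mul, zero_mul]]
  refine sum_congr rfl fun l _ => ?_
  rw [hmoment, integral_pow_two_mul_gaussianReal]
  push_cast
  ring

end ProbabilityTheory

/-- Almost-sure consistency of the debiased empirical moments in the i.i.d. scalar setting:
if `(θᵢ, εᵢ)` is an i.i.d. sequence with `ε₀ ~ N(0, v)` independent of `θ₀` and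
`E[|θ₀|^K] < ∞`, then with `Xᵢ = θᵢ + εᵢ` the debiased empirical `K`-th moment
`(1/n) ∑_{i<n} ∑_j C_{K,j} (-1)^j v^j Xᵢ^(K-2j)` converges almost surely to `E[θ₀^K]`. -/
theorem debiased_moment_slln
    {Ω : Type*} [MeasurableSpace Ω] (μ : Measure Ω) [IsProbabilityMeasure μ]
    (v : ℝ≥0) (K : ℕ) (θ ε : ℕ → Ω → ℝ)
    (hmeas : ∀ i, Measurable fun ω => (θ i ω, ε i ω))
    (hindep : iIndepFun (fun i ω => (θ i ω, ε i ω)) μ)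
    (hident : ∀ i : ℕ,
      IdentDistrib (fun ω => (θ i ω, ε i ω)) (fun ω => (θ 0 ω, ε 0 ω)) μ μ)
    (hindep0 : IndepFun (θ 0) (ε 0) μ)
    (hlaw : Measure.map (ε 0) μ = gaussianReal 0 v)
    (hint : Integrable (fun ω => |θ 0 ω| ^ K) μ) :
    ∀ᵐ ω ∂μ, Tendsto
      (fun n : ℕ => (1 / (n : ℝ)) * ∑ i ∈ Finset.range n,
        ∑ j ∈ Finset.range (K / 2 + 1),
          ((K.choose (2 * j) * ((2 * j).factorial / (j.factorial * 2 ^ j)) : ℕ) : ℝ)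
            * (-1) ^ j * (v : ℝ) ^ j * (θ i ω + ε i ω) ^ (K - 2 * j))
      atTop (nhds (∫ ω, (θ 0 ω) ^ K ∂μ)) := by
  have hε : HasLaw (ε 0) (gaussianReal 0 v) μ := ⟨(hmeas 0).snd.aemeasurable, hlaw⟩
  have hθ : ∀ k ≤ K, Integrable (fun ω => θ 0 ω ^ k) μ := fun k hk =>
    integrable_pow_of_integrable_abs_pow (hmeas 0).fst.aestronglyMeasurable hint hk
  have hX : ∀ k ≤ K, Integrable (fun ω => (θ 0 ω + ε 0 ω) ^ k) μ := fun k hk =>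
    hindep0.integrable_add_pow (fun j hj => hθ j (hj.trans hk))
      (fun j _ => hε.integrable_pow_of_gaussianReal j)
  let g : ℝ × ℝ → ℝ := fun p => gaussianMomentTransform (-(v : ℝ)) (fun k => (p.1 + p.2) ^ k) K
  have hg : Measurable g := by unfold g gaussianMomentTransform; fun_prop
  have hmean : ∫ ω, g (θ 0 ω, ε 0 ω) ∂μ = ∫ ω, θ 0 ω ^ K ∂μ := by
    rw [integral_gaussianMomentTransform _ hX, gaussianMomentTransform_congr fun k hk =>
      hindep0.integral_add_pow_of_hasLaw_gaussianReal hε fun j hj => hθ j (hj.trans hk),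
      gaussianMomentTransform_gaussianMomentTransform, neg_add_cancel,
      gaussianMomentTransform_zero]
  have hslln := strong_law_ae_real (fun i ω => g (θ i ω, ε i ω))
    (integrable_gaussianMomentTransform _ hX)
    (fun i j hij => (hindep.indepFun hij).comp hg hg) (fun i => (hident i).comp hg)
  filter_upwards [hslln] with ω hω
  rw [← hmean]
  convert hω using 2 with n
  simp only [g, gaussianMomentTransform, Nat.factorial_two_mul_div_s6, one_div_mul_eq_div,
    neg_pow (v : ℝ), mul_assoc]
end

section
/- Let d ∈ ℕ with d ≥ 1, let v > 0, let (Ω, 𝓕, ℙ) be a probability space, and let θ : ℕ → (Fin d → ℝ) be a deterministic sequence. Let (εᵢ)_{i ∈ ℕ} be an independent family of random vectors in Fin d → ℝ, each with law Measure.pi (fun _ : Fin d => gaussianReal 0 v), and set Xᵢ := θ i + εᵢ. Then, ℙ-almost surely, for every g ∈ ℕ there exists N ∈ ℕ such that for all n ≥ N: the only polynomial P ∈ MvPolynomial (Fin d) ℝ with P.totalDegree ≤ g satisfying MvPolynomial.eval (Xᵢ(ω)) P = 0 for all i < n is P = 0. -/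
/-!
For a fixed degree `g`, the polynomials of total degree at most `g` form a finite-dimensional
space `V`, so finitely many points `x₀, …, x_{K-1}` suffice for no nonzero element of `V` to vanish
at all of them. For a basis of `V`, the Gram determinant of the evaluation matrix at `K` points is a
polynomial `Δ` in the `K * d` coordinates; it does not vanish at the points `xⱼ`, so `Δ ≠ 0`, and
wherever it does not vanish no nonzero element of `V` vanishes at all `K` points. The first `K`
observations have a product law of atomless Gaussians, and the zero set of a nonzero polynomial is
null for such a law (Fubini, inducting on the number of variables: a nonzero univariate polynomial
has finitely many roots). Hence almost surely `N = K` works, for every `g` at once since there are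
countably many.
-/

open MeasureTheory ProbabilityTheory Filter
open scoped NNReal

namespace MvPolynomial

section ZeroSet

variable {ι : Type*}

lemma measurableSet_setOf_eval_eq_zero [Countable ι] (P : MvPolynomial ι ℝ) :
    MeasurableSet {x : ι → ℝ | eval x P = 0} :=
  (isClosed_eq (continuous_eval P) continuous_const).measurableSet

lemma measure_pi_setOf_eval_eq_zero_eq_of_equiv {α β : Type*} [Fintype α] [Fintype β] (e : α ≃ β)
    (ν : β → Measure ℝ) [∀ i, SigmaFinite (ν i)] (P : MvPolynomial β ℝ) :
    Measure.pi ν {x | eval x P = 0} =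
      Measure.pi (fun i ↦ ν (e i)) {x | eval x (rename e.symm P) = 0} := by
  rw [← Measure.pi_map_piCongrLeft e ν, Measure.map_apply (MeasurableEquiv.measurable _)
    (measurableSet_setOf_eval_eq_zero P)]
  congr 1 with x
  simp only [Set.mem_preimage, Set.mem_ofPred_eq, eval_rename]
  congr! 2 with b
  simp [MeasurableEquiv.piCongrLeft, Equiv.piCongrLeft, Equiv.piCongrLeft']
  rfl

lemma measure_pi_setOf_eval_eq_zero_option {α : Type*} [Fintype α] (ν : Option α → Measure ℝ)
    [∀ i, SigmaFinite (ν i)] [NullSingletonClass (ν none)]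
    (ih : ∀ Q : MvPolynomial α ℝ, Q ≠ 0 →
      Measure.pi (fun i ↦ ν (some i)) {x | eval x Q = 0} = 0)
    {P : MvPolynomial (Option α) ℝ} (hP : P ≠ 0) :
    Measure.pi ν {x | eval x P = 0} = 0 := by
  set q := optionEquivLeft ℝ α P
  have hq : q.leadingCoeff ≠ 0 := by simpa [q] using hP
  have hS := measurableSet_setOf_eval_eq_zero P
  rw [← Measure.pi_map_piOptionEquivProd ν,
    Measure.map_apply (MeasurableEquiv.measurable _) hS,
    Measure.measure_prod_null ((MeasurableEquiv.measurable _) hS)]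
  have hlc : ∀ᵐ s ∂Measure.pi (fun i ↦ ν (some i)), eval s q.leadingCoeff ≠ 0 :=
    measure_eq_zero_iff_ae_notMem.mp (ih _ hq)
  filter_upwards [hlc] with s hs
  have hmap : Polynomial.map (eval s) q ≠ 0 := fun h ↦
    hs (by simpa using congrArg (Polynomial.coeff · q.natDegree) h)
  refine measure_mono_null (fun y hy ↦ ?_)
    ((Polynomial.finite_setOfPred_isRoot hmap).measure_zero _)
  rw [Set.mem_ofPred_eq, Polynomial.IsRoot.def, ← optionEquivLeft_elim_eval]
  have hsy : (MeasurableEquiv.piOptionEquivProd fun _ ↦ ℝ).symm (s, y) = fun i ↦ i.elim y s := by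
    ext (_ | _) <;> rfl
  simpa only [Set.mem_preimage, hsy, Set.mem_ofPred_eq] using hy

theorem measure_pi_setOf_eval_eq_zero [Fintype ι] (ν : ι → Measure ℝ) [∀ i, SigmaFinite (ν i)]
    [∀ i, NullSingletonClass (ν i)] {P : MvPolynomial ι ℝ} (hP : P ≠ 0) :
    Measure.pi ν {x | eval x P = 0} = 0 := by
  refine Fintype.induction_empty_option (P := fun ι _ ↦ ∀ (ν : ι → Measure ℝ)
    [∀ i, SigmaFinite (ν i)] [∀ i, NullSingletonClass (ν i)] (P : MvPolynomial ι ℝ), P ≠ 0 →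
      Measure.pi ν {x | eval x P = 0} = 0) ?_ ?_ ?_ ι ν P hP
  · intro α β _ e ih ν _ _ P hP
    let _ : Fintype α := .ofEquiv β e.symm
    rw [measure_pi_setOf_eval_eq_zero_eq_of_equiv e]
    exact ih _ _ ((rename_injective _ e.symm.injective).ne_iff' (map_zero _) |>.mpr hP)
  · intro ν _ _ P hP
    obtain ⟨c, rfl⟩ := C_surjective PEmpty P
    simp_all
  · intro α _ ih ν _ _ P hP
    exact measure_pi_setOf_eval_eq_zero_option ν (ih _) hP

end ZeroSet

variable {σ ι R : Type*} [Field R]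

def EvalInjectiveOn (V : Submodule R (MvPolynomial σ R)) (x : ι → σ → R) : Prop :=
  ∀ P ∈ V, (∀ j, eval (x j) P = 0) → P = 0

theorem exists_evalInjectiveOn [Infinite R] (V : Submodule R (MvPolynomial σ R))
    [FiniteDimensional R V] : ∃ (K : ℕ) (x : Fin K → σ → R), EvalInjectiveOn V x := by
  classical
  let W (t : Finset (σ → R)) : Submodule R V :=
    ⨅ x ∈ t, LinearMap.ker ((aeval x).toLinearMap ∘ₗ V.subtype)
  obtain ⟨_, ⟨t, rfl⟩, hmin⟩ := wellFounded_lt.has_min (Set.range W) ⟨_, ∅, rfl⟩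
  have hbot : W t = ⊥ := by
    by_contra hne
    obtain ⟨P, hPW, hP0⟩ := Submodule.exists_mem_ne_zero_of_ne_bot hne
    obtain ⟨x, hx⟩ : ∃ x, eval x (P : MvPolynomial σ R) ≠ 0 := by
      by_contra! h
      exact hP0 (Subtype.ext (funext fun x ↦ by simpa using h x))
    refine hmin _ ⟨insert x t, rfl⟩ (lt_of_le_of_ne ?_ fun h ↦ hx ?_)
    · exact biInf_mono fun y hy ↦ Finset.mem_insert_of_mem hy
    · have : P ∈ W (insert x t) := h ▸ hPW
      simpa [W] using (Submodule.mem_iInf _).mp this x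
  refine ⟨t.card, fun j ↦ t.equivFin.symm j, fun P hP hvan ↦ ?_⟩
  have : (⟨P, hP⟩ : V) ∈ W t := by
    simp only [W, Submodule.mem_iInf]
    intro y hy
    simpa using hvan (t.equivFin ⟨y, hy⟩)
  simpa [hbot] using this

section Matrix

open Matrix

variable {κ : Type*} {V : Submodule R (MvPolynomial σ R)}

noncomputable def evalMatrix (b : Module.Basis κ R V) (x : ι → σ → R) : Matrix ι κ R :=
  Matrix.of fun j i ↦ eval (x j) (b i : MvPolynomial σ R)

lemma evalMatrix_mulVec [Fintype κ] (b : Module.Basis κ R V) (x : ι → σ → R) (c : κ → R)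
    (j : ι) :
    (evalMatrix b x *ᵥ c) j = eval (x j) (b.equivFun.symm c : MvPolynomial σ R) := by
  simp [evalMatrix, mulVec, dotProduct, map_sum, mul_comm]

variable [Fintype κ] [DecidableEq κ]

noncomputable def gramDet (b : Module.Basis κ R V) (ι : Type*) [Fintype ι] :
    MvPolynomial (ι × σ) R :=
  let N : Matrix ι κ (MvPolynomial (ι × σ) R) :=
    Matrix.of fun j i ↦ rename (Prod.mk j) (b i : MvPolynomial σ R)
  (Nᵀ * N).det

lemma eval_gramDet [Fintype ι] (b : Module.Basis κ R V) (x : ι → σ → R) :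
    eval (Function.uncurry x) (gramDet b ι) = ((evalMatrix b x)ᵀ * evalMatrix b x).det := by
  rw [gramDet, RingHom.map_det, RingHom.mapMatrix_apply, Matrix.map_mul, Matrix.transpose_map]
  congr
  all_goals ext j i; exact eval_rename _ _ _

variable [LinearOrder R] [IsStrictOrderedRing R]

lemma det_transpose_evalMatrix_mul_ne_zero_iff [Fintype ι] (b : Module.Basis κ R V)
    (x : ι → σ → R) :
    ((evalMatrix b x)ᵀ * evalMatrix b x).det ≠ 0 ↔ EvalInjectiveOn V x := by
  have hker (c : κ → R) :
      ((evalMatrix b x)ᵀ * evalMatrix b x) *ᵥ c = 0 ↔ evalMatrix b x *ᵥ c = 0 := by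
    simpa only [LinearMap.mem_ker, mulVecLin_apply] using
      SetLike.ext_iff.mp (ker_mulVecLin_transpose_mul_self (evalMatrix b x)) c
  simp only [Ne, ← exists_mulVec_eq_zero_iff, hker, not_exists, not_and, not_imp_not]
  constructor
  · intro h P hP hvan
    have hc : evalMatrix b x *ᵥ b.equivFun ⟨P, hP⟩ = 0 := _root_.funext fun j ↦ by
      rw [evalMatrix_mulVec, LinearEquiv.symm_apply_apply]
      exact hvan j
    simpa using h _ hc
  · intro h c hc
    have hP := h _ (b.equivFun.symm c).2 fun j ↦ by
      rw [← evalMatrix_mulVec, hc, Pi.zero_apply]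
    exact b.equivFun.symm.map_eq_zero_iff.mp (Subtype.ext hP)

theorem exists_ne_zero_forall_eval_ne_zero_evalInjectiveOn (V : Submodule R (MvPolynomial σ R))
    [FiniteDimensional R V] : ∃ (K : ℕ) (Δ : MvPolynomial (Fin K × σ) R), Δ ≠ 0 ∧
      ∀ x : Fin K → σ → R, eval (Function.uncurry x) Δ ≠ 0 → EvalInjectiveOn V x := by
  obtain ⟨K, x₀, hx₀⟩ := exists_evalInjectiveOn V
  let b := Module.finBasis R V
  refine ⟨K, gramDet b (Fin K), fun h ↦ ?_, fun x hx ↦ ?_⟩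
  · have := congrArg (eval (Function.uncurry x₀)) h
    rw [eval_gramDet, map_zero] at this
    exact (det_transpose_evalMatrix_mul_ne_zero_iff b x₀).mpr hx₀ this
  · rw [eval_gramDet] at hx
    exact (det_transpose_evalMatrix_mul_ne_zero_iff b x).mp hx

end Matrix

end MvPolynomial

namespace MeasureTheory.Measure

lemma pi_pi_map_uncurry {ι κ X : Type*} [Fintype ι] [Fintype κ] [MeasurableSpace X]
    (ν : ι → κ → Measure X) [∀ i j, SigmaFinite (ν i j)] :
    (Measure.pi fun i ↦ Measure.pi (ν i)).map Function.uncurry =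
      Measure.pi fun p : ι × κ ↦ ν p.1 p.2 := by
  refine (pi_eq fun s hs ↦ ?_).symm
  rw [map_apply measurable_uncurry (.univ_pi hs)]
  have : Function.uncurry ⁻¹' Set.univ.pi s =
      Set.univ.pi fun i ↦ Set.univ.pi fun j ↦ s (i, j) := by
    ext x
    simp
  rw [this, pi_pi, Fintype.prod_prod_type]
  simp_rw [pi_pi]

lemma pi_gaussianReal_map_add {ι : Type*} [Fintype ι] (m a : ι → ℝ) (v : ℝ≥0) :
    (Measure.pi fun j ↦ gaussianReal (m j) v).map (a + ·) =
      Measure.pi fun j ↦ gaussianReal (m j + a j) v := by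
  simp_rw [← gaussianReal_map_const_add]
  exact pi_map_pi fun j ↦ (measurable_const_add (a j)).aemeasurable

end MeasureTheory.Measure

namespace ProbabilityTheory

lemma iIndepFun.map_uncurry_eq_pi {Ω ι κ X : Type*} [MeasurableSpace Ω] {μ : Measure Ω}
    [IsProbabilityMeasure μ] [Fintype ι] [Fintype κ] [MeasurableSpace X]
    {Y : ι → Ω → κ → X} (hmeas : ∀ i, Measurable (Y i)) (hindep : iIndepFun Y μ)
    (ν : ι → κ → Measure X) [∀ i j, SigmaFinite (ν i j)]
    (hlaw : ∀ i, μ.map (Y i) = Measure.pi (ν i)) :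
    μ.map (fun ω ↦ Function.uncurry fun i ↦ Y i ω) = Measure.pi fun p : ι × κ ↦ ν p.1 p.2 := by
  have hjoint : μ.map (fun ω i ↦ Y i ω) = Measure.pi fun i ↦ Measure.pi (ν i) := by
    simp_rw [(iIndepFun_iff_map_fun_eq_pi_map fun i ↦ (hmeas i).aemeasurable).mp hindep, hlaw]
  rw [← Measure.pi_pi_map_uncurry, ← hjoint,
    Measure.map_map measurable_uncurry (measurable_pi_lambda _ hmeas)]
  rfl

end ProbabilityTheory

theorem naive_vanishing_ideal_trivial_general
    (d : ℕ) (v : ℝ≥0) (hv : 0 < v)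
    {Ω : Type*} [MeasurableSpace Ω] (μ : Measure Ω) [IsProbabilityMeasure μ]
    (θ : ℕ → Fin d → ℝ) (ε : ℕ → Ω → Fin d → ℝ)
    (hmeas : ∀ i, Measurable (ε i))
    (hindep : iIndepFun ε μ)
    (hlaw : ∀ i, Measure.map (ε i) μ = Measure.pi fun _ : Fin d => gaussianReal 0 v) :
    ∀ᵐ ω ∂μ, ∀ g : ℕ, ∃ N : ℕ, ∀ n ≥ N, ∀ P : MvPolynomial (Fin d) ℝ,
      P.totalDegree ≤ g →
        (∀ i < n, MvPolynomial.eval (θ i + ε i ω) P = 0) → P = 0 := by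
  have (m : ℝ) := nullSingletonClass_gaussianReal (μ := m) hv.ne'
  refine ae_all_iff.mpr fun g ↦ ?_
  obtain ⟨K, Δ, hΔ, hinj⟩ :=
    MvPolynomial.exists_ne_zero_forall_eval_ne_zero_evalInjectiveOn
      (MvPolynomial.restrictTotalDegree (Fin d) ℝ g)
  let X (i : Fin K) (ω : Ω) : Fin d → ℝ := θ i + ε i ω
  have hXmeas (i : Fin K) : Measurable (X i) := (hmeas i).const_add _
  have hXlaw (i : Fin K) : μ.map (X i) = Measure.pi fun j ↦ gaussianReal (θ i j) v := by
    rw [show X i = (θ i + ·) ∘ ε i from rfl, ← Measure.map_map (measurable_const_add _) (hmeas i),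
      hlaw, Measure.pi_gaussianReal_map_add]
    simp
  have hXindep : iIndepFun X μ :=
    (hindep.precomp Fin.val_injective).comp _ fun i ↦ measurable_const_add (θ i)
  have hgood : ∀ᵐ ω ∂μ, MvPolynomial.eval (Function.uncurry fun i ↦ X i ω) Δ ≠ 0 := by
    have hZ : Measurable fun ω ↦ Function.uncurry fun i ↦ X i ω :=
      measurable_uncurry.comp (measurable_pi_lambda _ hXmeas)
    refine ae_of_ae_map hZ.aemeasurable (p := fun z ↦ MvPolynomial.eval z Δ ≠ 0) ?_
    rw [hXindep.map_uncurry_eq_pi hXmeas _ hXlaw]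
    exact measure_eq_zero_iff_ae_notMem.mp (MvPolynomial.measure_pi_setOf_eval_eq_zero _ hΔ)
  filter_upwards [hgood] with ω hω
  exact ⟨K, fun n hn P hP hvan ↦ hinj _ hω P ((MvPolynomial.mem_restrictTotalDegree _ _ _).mpr hP)
    fun j ↦ hvan j (j.2.trans_le hn)⟩

/-- Failure of the naive approach: with nondegenerate isotropic Gaussian noise,
almost surely for every degree `g` the only polynomial of total degree at most `g`
vanishing at all the first `n` noisy observations `Xᵢ = θᵢ + εᵢ` (for `n` large)
is the zero polynomial. -/
theorem naive_vanishing_ideal_trivial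
    (d : ℕ) (hd : 1 ≤ d) (v : ℝ≥0) (hv : 0 < v)
    {Ω : Type*} [MeasurableSpace Ω] (μ : Measure Ω) [IsProbabilityMeasure μ]
    (θ : ℕ → Fin d → ℝ) (ε : ℕ → Ω → Fin d → ℝ)
    (hmeas : ∀ i, Measurable (ε i))
    (hindep : iIndepFun ε μ)
    (hlaw : ∀ i, Measure.map (ε i) μ = Measure.pi fun _ : Fin d => gaussianReal 0 v) :
    ∀ᵐ ω ∂μ, ∀ g : ℕ, ∃ N : ℕ, ∀ n ≥ N, ∀ P : MvPolynomial (Fin d) ℝ,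
      P.totalDegree ≤ g →
        (∀ i < n, MvPolynomial.eval (θ i + ε i ω) P = 0) → P = 0 :=
  naive_vanishing_ideal_trivial_general d v hv μ θ ε hmeas hindep hlaw
end

section
/- Let d, m ∈ ℕ and fix degrees g : Fin m → ℕ. Let P ∈ MvPolynomial (Fin d) ℝ, and for each n ∈ ℕ let Q^{(n)} : Fin m → MvPolynomial (Fin d) ℝ satisfy (Q^{(n)} j).totalDegree ≤ g j for all j. Suppose that for every monomial exponent m' : Fin d →₀ ℕ, the coefficient (∏_{j : Fin m} Q^{(n)} j).coeff m' converges to P.coeff m' as n → ∞. Then there exist polynomials Q : Fin m → MvPolynomial (Fin d) ℝ with (Q j).totalDegree ≤ g j for all j such that P = ∏_{j : Fin m} Q j. In other words, the set of real polynomials that factor into m factors of total degrees at most g₁, …, g_m is closed under coefficientwise limits. -/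
/-!
Normalize each factor so that its coefficient vector, indexed by the finitely many monomials of
bounded degree, lies on the unit sphere. By compactness a subsequence of the normalized factors
converges coefficientwise to nonzero polynomials `r j`, whose product is nonzero because
`ℝ[x₁, …, x_d]` is a domain. The original products are scalar multiples of the normalized ones,
so comparing them at a nonvanishing coefficient of `∏ j, r j` shows that the scalars converge to
some `c` with `P = c • ∏ j, r j`; finally `c` is absorbed into one factor.
-/

open Filter Topology MvPolynomial

theorem exists_strictMono_tendsto_inv_norm_smul {ι E : Type*} [Fintype ι] [NormedAddCommGroup E]
    [NormedSpace ℝ E] [ProperSpace E] {v : ℕ → ι → E} (hv : ∀ n j, v n j ≠ 0) :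
    ∃ w : ι → E, (∀ j, ‖w j‖ = 1) ∧ ∃ φ : ℕ → ℕ, StrictMono φ ∧
      ∀ j, Tendsto (fun k => ‖v (φ k) j‖⁻¹ • v (φ k) j) atTop (𝓝 (w j)) := by
  have hsphere : ∀ n, (fun j => ‖v n j‖⁻¹ • v n j) ∈ Set.univ.pi fun _ => Metric.sphere 0 1 :=
    fun n j _ => by simp [norm_smul, inv_mul_cancel₀ (norm_ne_zero_iff.2 (hv n j))]
  obtain ⟨w, hw, φ, hφ, hlim⟩ :=
    (isCompact_univ_pi fun _ : ι => isCompact_sphere (0 : E) 1).tendsto_subseq hsphere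
  exact ⟨w, fun j => by simpa using hw j trivial, φ, hφ, tendsto_pi_nhds.1 hlim⟩

theorem Finset.smul_prod_eq_prod_update {ι K M : Type*} [DecidableEq ι] [CommMonoid M]
    [SMul K M] [IsScalarTower K M M] {s : Finset ι} {i : ι} (hi : i ∈ s) (c : K) (f : ι → M) :
    c • ∏ j ∈ s, f j = ∏ j ∈ s, Function.update f i (c • f i) j := by
  rw [prod_update_of_mem hi, smul_mul_assoc, ← prod_eq_mul_prod_sdiff_singleton_of_mem hi]

namespace MvPolynomial

variable {σ R α : Type*} {l : Filter α}

section Topology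

variable [CommSemiring R] [TopologicalSpace R]

open MvPowerSeries.WithPiTopology in
/-- Coefficientwise convergence is convergence in the product topology on power series, where
multiplication is continuous. -/
theorem tendsto_coeff_prod [IsTopologicalSemiring R] {ι : Type*} (s : Finset ι)
    {f : α → ι → MvPolynomial σ R} {g : ι → MvPolynomial σ R}
    (h : ∀ j ∈ s, ∀ t, Tendsto (fun n => (f n j).coeff t) l (𝓝 ((g j).coeff t)))
    (t : σ →₀ ℕ) :
    Tendsto (fun n => (∏ j ∈ s, f n j).coeff t) l (𝓝 ((∏ j ∈ s, g j).coeff t)) := by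
  let φ := coeToMvPowerSeries.ringHom (σ := σ) (R := R)
  have hφ : Tendsto (fun n => φ (∏ j ∈ s, f n j)) l (𝓝 (φ (∏ j ∈ s, g j))) := by
    simp only [map_prod]
    exact tendsto_finsetProd s fun j hj =>
      (tendsto_iff_coeff_tendsto _ _ _).2 fun t => by
        simpa only [φ, coeToMvPowerSeries.ringHom_apply, coeff_coe] using h j hj t
  simpa only [φ, coeToMvPowerSeries.ringHom_apply, coeff_coe] using
    (tendsto_iff_coeff_tendsto _ _ _).1 hφ t

variable [T1Space R] {p : α → MvPolynomial σ R} {P : MvPolynomial σ R}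

theorem eventually_ne_zero_of_tendsto_coeff
    (hp : ∀ t, Tendsto (fun n => (p n).coeff t) l (𝓝 (P.coeff t))) (hP : P ≠ 0) :
    ∀ᶠ n in l, p n ≠ 0 := by
  obtain ⟨t, ht⟩ := ne_zero_iff.1 hP
  filter_upwards [(hp t).eventually_ne ht] with n hn hzero
  exact hn (by rw [hzero, coeff_zero])

theorem totalDegree_le_of_tendsto_coeff [l.NeBot] {D : ℕ}
    (hp : ∀ t, Tendsto (fun n => (p n).coeff t) l (𝓝 (P.coeff t)))
    (hdeg : ∀ᶠ n in l, (p n).totalDegree ≤ D) : P.totalDegree ≤ D := by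
  refine Finset.sup_le fun t ht => ?_
  obtain ⟨n, hn, hdeg⟩ := ((hp t).eventually_ne (mem_support_iff.1 ht)).and hdeg |>.exists
  exact (le_totalDegree (mem_support_iff.2 hn)).trans hdeg

end Topology

theorem exists_eq_smul_of_tendsto_coeff {K : Type*} [Field K] [TopologicalSpace K]
    [IsTopologicalDivisionRing K] [T2Space K] {p : α → MvPolynomial σ K} {c : α → K}
    {r P : MvPolynomial σ K} [l.NeBot] (hr : r ≠ 0)
    (hp : ∀ t, Tendsto (fun n => (p n).coeff t) l (𝓝 (r.coeff t)))
    (hcp : ∀ t, Tendsto (fun n => (c n • p n).coeff t) l (𝓝 (P.coeff t))) :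
    ∃ c₀ : K, P = c₀ • r := by
  obtain ⟨t₀, ht₀⟩ := ne_zero_iff.1 hr
  have hc : Tendsto c l (𝓝 (P.coeff t₀ / r.coeff t₀)) := by
    refine ((hcp t₀).div (hp t₀) ht₀).congr' ?_
    filter_upwards [(hp t₀).eventually_ne ht₀] with n hn
    simp only [Pi.div_apply, coeff_smul, smul_eq_mul, mul_div_cancel_right₀ _ hn]
  refine ⟨P.coeff t₀ / r.coeff t₀, ext _ _ fun t => ?_⟩
  rw [coeff_smul, smul_eq_mul]
  refine tendsto_nhds_unique (hcp t) ?_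
  simpa only [coeff_smul, smul_eq_mul] using hc.mul (hp t)

noncomputable def ofCoeffsOn [CommSemiring R] (S : Finset (σ →₀ ℕ)) (w : S → R) :
    MvPolynomial σ R :=
  ∑ s : S, monomial s (w s)

theorem coeff_ofCoeffsOn_of_mem [CommSemiring R] {S : Finset (σ →₀ ℕ)} (w : S → R)
    {t : σ →₀ ℕ} (ht : t ∈ S) : (ofCoeffsOn S w).coeff t = w ⟨t, ht⟩ := by
  classical
  simp only [ofCoeffsOn, coeff_sum, coeff_monomial]
  rw [Fintype.sum_eq_single ⟨t, ht⟩ fun s hs => if_neg fun hst => hs (Subtype.ext hst),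
    if_pos rfl]

theorem coeff_ofCoeffsOn_of_notMem [CommSemiring R] {S : Finset (σ →₀ ℕ)} (w : S → R)
    {t : σ →₀ ℕ} (ht : t ∉ S) : (ofCoeffsOn S w).coeff t = 0 := by
  classical
  simp only [ofCoeffsOn, coeff_sum, coeff_monomial]
  exact Finset.sum_eq_zero fun s _ => if_neg fun hst : (s : σ →₀ ℕ) = t => ht (hst ▸ s.2)

theorem exists_strictMono_smul_tendsto_coeff {ι : Type*} [Fintype ι] (S : Finset (σ →₀ ℕ))
    {q : ℕ → ι → MvPolynomial σ ℝ} (hS : ∀ n j, (q n j).support ⊆ S)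
    (hq : ∀ n j, q n j ≠ 0) :
    ∃ (a : ℕ → ι → ℝ) (r : ι → MvPolynomial σ ℝ) (φ : ℕ → ℕ), StrictMono φ ∧
      (∀ n j, a n j ≠ 0) ∧ (∀ j, r j ≠ 0) ∧
      ∀ j t, Tendsto (fun k => (a (φ k) j • q (φ k) j).coeff t) atTop
        (𝓝 ((r j).coeff t)) := by
  let v : ℕ → ι → S → ℝ := fun n j s => (q n j).coeff s
  have hv : ∀ n j, v n j ≠ 0 := by
    intro n j hzero
    obtain ⟨t, ht⟩ := ne_zero_iff.1 (hq n j)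
    exact ht (congrFun hzero ⟨t, hS n j (mem_support_iff.2 ht)⟩)
  obtain ⟨w, hw, φ, hφ, hlim⟩ := exists_strictMono_tendsto_inv_norm_smul hv
  refine ⟨fun n j => ‖v n j‖⁻¹, fun j => ofCoeffsOn S (w j), φ, hφ,
    fun n j => inv_ne_zero (norm_ne_zero_iff.2 (hv n j)), fun j hzero => ?_, fun j t => ?_⟩
  · have hwj : w j ≠ 0 := norm_ne_zero_iff.1 (by simp [hw j])
    obtain ⟨s, hs⟩ := Function.ne_iff.1 hwj
    exact hs (by simpa [coeff_ofCoeffsOn_of_mem (w j) s.2] using congrArg (coeff s) hzero)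
  · by_cases ht : t ∈ S
    · simpa only [coeff_ofCoeffsOn_of_mem _ ht, coeff_smul, Pi.smul_apply] using
        tendsto_pi_nhds.1 (hlim j) ⟨t, ht⟩
    · have hq0 : ∀ n, (q n j).coeff t = 0 := fun n => notMem_support_iff.1 fun h => ht (hS n j h)
      simp only [coeff_ofCoeffsOn_of_notMem _ ht, coeff_smul, hq0, smul_zero, tendsto_const_nhds]

theorem exists_prod_eq_of_tendsto_coeff_prod [Finite σ] {ι : Type*} [Fintype ι] [Nonempty ι]
    {g : ι → ℕ} {q : ℕ → ι → MvPolynomial σ ℝ} {P : MvPolynomial σ ℝ}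
    (hq : ∀ n j, q n j ≠ 0) (hdeg : ∀ n j, (q n j).totalDegree ≤ g j)
    (hconv : ∀ t, Tendsto (fun n => (∏ j, q n j).coeff t) atTop (𝓝 (P.coeff t))) :
    ∃ R : ι → MvPolynomial σ ℝ, (∀ j, (R j).totalDegree ≤ g j) ∧ P = ∏ j, R j := by
  classical
  obtain ⟨i₀⟩ := ‹Nonempty ι›
  let S := (Finsupp.finite_of_degree_le (σ := σ) (Finset.univ.sup g)).toFinset
  have hS : ∀ n j, (q n j).support ⊆ S := fun n j t ht => (Set.Finite.mem_toFinset _).2 <|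
    (le_totalDegree ht).trans ((hdeg n j).trans (Finset.le_sup (Finset.mem_univ j)))
  obtain ⟨a, r, φ, hφ, ha, hr, hlim⟩ := exists_strictMono_smul_tendsto_coeff S hS hq
  have hr_deg : ∀ j, (r j).totalDegree ≤ g j := fun j => totalDegree_le_of_tendsto_coeff (hlim j)
    (.of_forall fun k => (totalDegree_smul_le _ _).trans (hdeg _ j))
  have hprod : ∀ k, (∏ j, a (φ k) j)⁻¹ • ∏ j, a (φ k) j • q (φ k) j = ∏ j, q (φ k) j :=
    fun k => by rw [Finset.prod_smul, inv_smul_smul₀ (Finset.prod_ne_zero_iff.2 fun j _ => ha _ j)]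
  have hconv_subseq : ∀ t, Tendsto (fun k => ((∏ j, a (φ k) j)⁻¹ •
      ∏ j, a (φ k) j • q (φ k) j).coeff t) atTop (𝓝 (P.coeff t)) := fun t => by
    simpa only [hprod, Function.comp_def] using (hconv t).comp hφ.tendsto_atTop
  obtain ⟨c, hc⟩ := exists_eq_smul_of_tendsto_coeff (Finset.prod_ne_zero_iff.2 fun j _ => hr j)
    (tendsto_coeff_prod Finset.univ fun j _ => hlim j) hconv_subseq
  refine ⟨Function.update r i₀ (c • r i₀), fun j => ?_,
    hc.trans (Finset.smul_prod_eq_prod_update (Finset.mem_univ i₀) c r)⟩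
  rcases eq_or_ne j i₀ with rfl | hj
  · simpa using (totalDegree_smul_le _ _).trans (hr_deg j)
  · simpa [hj] using hr_deg j

end MvPolynomial

/-- Closedness of the set of polynomials factoring into `m` factors of prescribed
total degrees: if the products `∏ j, Q n j`, with `(Q n j).totalDegree ≤ g j`,
converge coefficientwise to `P`, then `P` itself factors into `m` polynomials of
total degrees at most `g j`. -/
theorem factorizable_closed_under_coeff_limits (d m : ℕ) (g : Fin m → ℕ)
    (P : MvPolynomial (Fin d) ℝ) (Q : ℕ → Fin m → MvPolynomial (Fin d) ℝ)
    (hdeg : ∀ n j, (Q n j).totalDegree ≤ g j)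
    (hconv : ∀ m' : Fin d →₀ ℕ,
      Tendsto (fun n => (∏ j : Fin m, Q n j).coeff m') atTop (nhds (P.coeff m'))) :
    ∃ R : Fin m → MvPolynomial (Fin d) ℝ,
      (∀ j, (R j).totalDegree ≤ g j) ∧ P = ∏ j : Fin m, R j := by
  rcases isEmpty_or_nonempty (Fin m) with hm | hm
  · refine ⟨isEmptyElim, isEmptyElim, ext _ _ fun t => tendsto_nhds_unique (hconv t) ?_⟩
    simpa only [Finset.univ_eq_empty, Finset.prod_empty] using tendsto_const_nhds
  by_cases hP : P = 0
  · exact ⟨0, fun j => by simp, by rw [hP, Finset.prod_eq_zero (Finset.mem_univ hm.some) rfl]⟩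
  obtain ⟨N, hN⟩ := eventually_atTop.1 (eventually_ne_zero_of_tendsto_coeff hconv hP)
  have hQ : ∀ n j, Q (n + N) j ≠ 0 := fun n j =>
    Finset.prod_ne_zero_iff.1 (hN _ (Nat.le_add_left N n)) j (Finset.mem_univ j)
  exact exists_prod_eq_of_tendsto_coeff_prod hQ (fun n j => hdeg _ j)
    fun t => (hconv t).comp (tendsto_add_atTop_nat N)
end

section
/- Let d, g, N ∈ ℕ, let P : Fin N → MvPolynomial (Fin d) ℝ with (P i).totalDegree ≤ g for each i, and let x₀ : Fin d → ℝ satisfy MvPolynomial.eval x₀ (P i) = 0 for every i. Assume that the gradient vectors (fun j : Fin d => MvPolynomial.eval x₀ (MvPolynomial.pderiv j (P i))), for i : Fin N, are linearly independent in Fin d → ℝ. Then for every ε > 0 there exists δ > 0 such that: for every Q : Fin N → MvPolynomial (Fin d) ℝ with (Q i).totalDegree ≤ g for all i and with |(Q i).coeff m − (P i).coeff m| < δ for all i : Fin N and all exponent vectors m : Fin d →₀ ℕ, there exists x : Fin d → ℝ with ‖x − x₀‖ < ε and MvPolynomial.eval x (Q i) = 0 for every i. -/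
/-!
Encode a system of polynomials supported on a fixed finite set of monomials by its coefficient
vector `c`, and let `F (c, x)` be the system with coefficients `c` evaluated at `x`. The map
`(c, x) ↦ (c, F (c, x))` is analytic, and its derivative at `(c₀, x₀)` is onto because the
`x`-derivative is the Jacobian of the system at `x₀`, whose rows are linearly independent. By the
surjective form of the inverse function theorem it maps every neighbourhood of `(c₀, x₀)` onto a
neighbourhood of `(c₀, 0)`: every `c` close to `c₀` has a zero close to `x₀`.
-/

open Filter Topology

section ImplicitZeros

variable {𝕜 E X Y : Type*} [NontriviallyNormedField 𝕜]
  [NormedAddCommGroup E] [NormedSpace 𝕜 E] [CompleteSpace E]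
  [NormedAddCommGroup X] [NormedSpace 𝕜 X] [CompleteSpace X]
  [NormedAddCommGroup Y] [NormedSpace 𝕜 Y] [CompleteSpace Y]

theorem HasStrictFDerivAt.eventually_exists_mem_map_eq_zero {F : E × X → Y} {L : E × X →L[𝕜] Y}
    {e₀ : E} {x₀ : X} (hF : HasStrictFDerivAt F L (e₀, x₀)) {D : X →L[𝕜] Y}
    (hD : HasFDerivAt (fun x => F (e₀, x)) D x₀) (hDsurj : Function.Surjective D)
    (hzero : F (e₀, x₀) = 0) {U : Set X} (hU : U ∈ 𝓝 x₀) :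
    ∀ᶠ e in 𝓝 e₀, ∃ x ∈ U, F (e, x) = 0 := by
  have hLD : L.comp (.inr 𝕜 E X) = D :=
    (hF.hasFDerivAt.comp x₀ (hasFDerivAt_prodMk_right e₀ x₀)).unique hD
  have hsurj : (ContinuousLinearMap.fst 𝕜 E X |>.prod L).range = ⊤ := by
    refine LinearMap.range_eq_top.2 fun ⟨u, v⟩ => ?_
    obtain ⟨w, hw⟩ := hDsurj (v - L (u, 0))
    refine ⟨(u, w), Prod.ext rfl ?_⟩
    have hLw : L (u, w) = L (u, 0) + D w := by
      rw [← hLD, ContinuousLinearMap.comp_apply, ← map_add]; simp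
    simp [hLw, hw]
  have hmap := (hasStrictFDerivAt_fst.prodMk hF).map_nhds_eq_of_surj hsurj
  have himage : (fun p : E × X => (p.1, F p)) '' (Set.univ ×ˢ U) ∈ 𝓝 (e₀, (0 : Y)) := by
    rw [← hzero, ← hmap]
    exact image_mem_map (prod_mem_nhds univ_mem hU)
  filter_upwards [(continuous_id.prodMk continuous_const).continuousAt.preimage_mem_nhds himage]
    with e he
  obtain ⟨⟨e', x⟩, ⟨-, hx⟩, he⟩ := he
  obtain ⟨rfl, hFx⟩ := Prod.ext_iff.1 he
  exact ⟨x, hx, hFx⟩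

end ImplicitZeros

theorem Matrix.mulVec_surjective_of_linearIndependent_row {K m n : Type*} [Field K] [Fintype m]
    [Fintype n] {A : Matrix m n K} (hA : LinearIndependent K A.row) :
    Function.Surjective A.mulVec := by
  have : LinearMap.range A.mulVecLin = ⊤ := Submodule.eq_top_of_finrank_eq <| by
    rw [← Matrix.rank, hA.rank_matrix, Module.finrank_fintype_fun_eq_card]
  exact LinearMap.range_eq_top.1 this

namespace MvPolynomial

section OfCoeffs

variable {R σ : Type*} [CommSemiring R]

noncomputable def ofCoeffs (s : Finset (σ →₀ ℕ)) (c : s → R) : MvPolynomial σ R :=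
  ∑ m : s, monomial (m : σ →₀ ℕ) (c m)

theorem ofCoeffs_coeff {s : Finset (σ →₀ ℕ)} {p : MvPolynomial σ R} (hp : p.support ⊆ s) :
    ofCoeffs s (fun m => p.coeff m) = p := by
  rw [ofCoeffs, Finset.sum_coe_sort s (fun m => monomial m (p.coeff m))]
  conv_rhs => rw [p.as_sum]
  exact (Finset.sum_subset hp fun m _ hm => by rw [notMem_support_iff.1 hm, map_zero]).symm

theorem eval_ofCoeffs (s : Finset (σ →₀ ℕ)) (c : s → R) (x : σ → R) :
    eval x (ofCoeffs s c) = ∑ m : s, c m * eval x (monomial (m : σ →₀ ℕ) 1) := by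
  simp [ofCoeffs, eval_monomial]

end OfCoeffs

variable {𝕜 σ : Type*} [NontriviallyNormedField 𝕜] [Fintype σ]

theorem hasFDerivAt_eval (p : MvPolynomial σ 𝕜) (x : σ → 𝕜) :
    HasFDerivAt (fun y => eval y p) (∑ j, eval x (pderiv j p) •
      ContinuousLinearMap.proj (R := 𝕜) (φ := fun _ : σ => 𝕜) j) x := by
  classical
  induction p using MvPolynomial.induction_on with
  | C a =>
    simp only [eval_C]
    refine (hasFDerivAt_const (𝕜 := 𝕜) a x).congr_fderiv (ContinuousLinearMap.ext fun v => ?_)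
    simp
  | add p q hp hq =>
    simp only [map_add]
    refine (hp.add hq).congr_fderiv (ContinuousLinearMap.ext fun v => ?_)
    simp [Finset.sum_add_distrib, add_mul]
  | mul_X p j hp =>
    simp only [map_mul, eval_X]
    refine (hp.mul (hasFDerivAt_apply (𝕜 := 𝕜) (F' := fun _ : σ => 𝕜) j x)).congr_fderiv
      (ContinuousLinearMap.ext fun v => ?_)
    simp [pderiv_X, Pi.single_apply, apply_ite (eval x), ite_mul, add_mul, Finset.sum_add_distrib,
      Finset.mul_sum, mul_assoc]

theorem analyticAt_eval_ofCoeffs {ι : Type*} [Fintype ι] (s : Finset (σ →₀ ℕ))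
    (z : (ι → s → 𝕜) × (σ → 𝕜)) :
    AnalyticAt 𝕜 (fun q : (ι → s → 𝕜) × (σ → 𝕜) => fun i => eval q.2 (ofCoeffs s (q.1 i)))
      z := by
  simp only [eval_ofCoeffs]
  refine AnalyticAt.pi fun i => Finset.analyticAt_fun_sum _ fun m _ => ?_
  have hc : AnalyticAt 𝕜 (fun q : (ι → s → 𝕜) × (σ → 𝕜) => q.1 i m) z :=
    (((ContinuousLinearMap.proj (R := 𝕜) (φ := fun _ : s => 𝕜) m).comp
      (ContinuousLinearMap.proj (R := 𝕜) (φ := fun _ : ι => s → 𝕜) i)).comp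
      (ContinuousLinearMap.fst 𝕜 _ (σ → 𝕜))).analyticAt z
  have he : AnalyticAt 𝕜
      (fun q : (ι → s → 𝕜) × (σ → 𝕜) => eval q.2 (monomial (m : σ →₀ ℕ) 1)) z :=
    AnalyticOnNhd.eval_continuousLinearMap (ContinuousLinearMap.snd 𝕜 (ι → s → 𝕜) (σ → 𝕜)) _ z
      trivial
  exact hc.mul he

theorem eventually_exists_common_zero_ofCoeffs [CompleteSpace 𝕜] {ι : Type*} [Fintype ι]
    {s : Finset (σ →₀ ℕ)} {P : ι → MvPolynomial σ 𝕜} (hs : ∀ i, (P i).support ⊆ s)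
    {x₀ : σ → 𝕜} (hx₀ : ∀ i, eval x₀ (P i) = 0)
    (hgrad : LinearIndependent 𝕜 fun i j => eval x₀ (pderiv j (P i)))
    {U : Set (σ → 𝕜)} (hU : U ∈ 𝓝 x₀) :
    ∀ᶠ c in 𝓝 (fun i (m : s) => (P i).coeff m), ∃ x ∈ U, ∀ i, eval x (ofCoeffs s (c i)) = 0 := by
  have hD := hasFDerivAt_pi.2 fun i => hasFDerivAt_eval (P i) x₀
  have hDsurj : Function.Surjective (ContinuousLinearMap.pi fun i =>
      ∑ j, eval x₀ (pderiv j (P i)) •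
        ContinuousLinearMap.proj (R := 𝕜) (φ := fun _ : σ => 𝕜) j) := by
    convert Matrix.mulVec_surjective_of_linearIndependent_row
      (A := .of fun i j => eval x₀ (pderiv j (P i))) hgrad using 1
    ext v i
    simp [Matrix.mulVec, dotProduct]
  filter_upwards [(analyticAt_eval_ofCoeffs s _).hasStrictFDerivAt.eventually_exists_mem_map_eq_zero
    (by simpa [ofCoeffs_coeff, hs] using hD) hDsurj
    (by ext i; simpa [ofCoeffs_coeff, hs] using hx₀ i) hU] with c ⟨x, hx, hcx⟩
  exact ⟨x, hx, congrFun hcx⟩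

end MvPolynomial

/-- Stability of common zeros of a regular polynomial system under small coefficient
perturbations: if `x₀` is a common zero of `P 1, …, P N` (each of total degree at most `g`)
at which the gradients are linearly independent, then for every `ε > 0` there is `δ > 0`
such that any system `Q` of the same degrees whose coefficients are `δ`-close to those of
`P` has a common zero within Euclidean distance `ε` of `x₀`. -/
theorem zeros_stable_under_coeff_perturbation (d g N : ℕ)
    (P : Fin N → MvPolynomial (Fin d) ℝ)
    (hPdeg : ∀ i, (P i).totalDegree ≤ g)
    (x₀ : Fin d → ℝ) (hx₀ : ∀ i, MvPolynomial.eval x₀ (P i) = 0)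
    (hgrad : LinearIndependent ℝ
      (fun i : Fin N => fun j : Fin d =>
        MvPolynomial.eval x₀ (MvPolynomial.pderiv j (P i)))) :
    ∀ ε > (0 : ℝ), ∃ δ > (0 : ℝ),
      ∀ Q : Fin N → MvPolynomial (Fin d) ℝ,
        (∀ i, (Q i).totalDegree ≤ g) →
        (∀ (i : Fin N) (m : Fin d →₀ ℕ), |(Q i).coeff m - (P i).coeff m| < δ) →
        ∃ x : Fin d → ℝ,
          Real.sqrt (∑ j : Fin d, (x j - x₀ j) ^ 2) < ε ∧
          ∀ i, MvPolynomial.eval x (Q i) = 0 := by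
  intro ε hε
  set s := (Finsupp.finite_of_degree_le (σ := Fin d) g).toFinset
  have hs : ∀ R : MvPolynomial (Fin d) ℝ, R.totalDegree ≤ g → R.support ⊆ s :=
    fun R hR m hm => (Set.Finite.mem_toFinset _).2 ((MvPolynomial.le_totalDegree hm).trans hR)
  have hU : {x : Fin d → ℝ | Real.sqrt (∑ j, (x j - x₀ j) ^ 2) < ε} ∈ 𝓝 x₀ :=
    (Continuous.tendsto (by fun_prop) x₀).eventually_lt_const (by simpa using hε)
  obtain ⟨δ, hδ, hzero⟩ := Metric.eventually_nhds_iff.1 <|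
    MvPolynomial.eventually_exists_common_zero_ofCoeffs (fun i => hs _ (hPdeg i)) hx₀ hgrad hU
  refine ⟨δ, hδ, fun Q hQdeg hQ => ?_⟩
  obtain ⟨x, hx, hQx⟩ := hzero (y := fun i (m : s) => (Q i).coeff m) <| (dist_pi_lt_iff hδ).2
    fun i => (dist_pi_lt_iff hδ).2 fun m => hQ i m
  exact ⟨x, hx, fun i => by simpa [MvPolynomial.ofCoeffs_coeff (hs _ (hQdeg i))] using hQx i⟩
end
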